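/- Let A ∈ ℝ^{n×n} be Schur stable (every eigenvalue of A has modulus strictly less than 1), let B ∈ ℝ^{n×m}, and let M ∈ ℝ^{(n+m)×(n+m)} be symmetric with positive semidefinite upper-left n×n block M₁₁. If a symmetric matrix P ∈ ℝ^{n×n} satisfies M + [[AᵀPA − P, AᵀPB],[BᵀPA, BᵀPB]] ≺ 0 (negative definite), then P is positive definite. -/

import Mathlib

/-!
Testing the LMI on vectors `(x, 0)` gives `P - AᵀPA ≻ M₁₁ ⪰ 0`. Telescoping along the orbit
`Aᵏx` then yields `xᵀPx ≥ (Aᴺx)ᵀP(Aᴺx) + xᵀ(P - AᵀPA)x` for all `N ≥ 1`, and Schur stability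
(via Gelfand's formula, `Aᴺ → 0`) makes the first term vanish in the limit.
-/

open Matrix Filter Topology Finset

theorem tendsto_pow_atTop_nhds_zero_of_forall_spectrum_norm_lt_one {𝔸 : Type*} [NormedRing 𝔸]
    [NormedAlgebra ℂ 𝔸] [CompleteSpace 𝔸] {a : 𝔸} (ha : ∀ z ∈ spectrum ℂ a, ‖z‖ < 1) :
    Tendsto (fun k : ℕ => a ^ k) atTop (𝓝 0) := by
  nontriviality 𝔸
  have hρ : spectralRadius ℂ a < 1 := by
    simpa using spectrum.spectralRadius_lt_of_forall_lt a (r := 1) fun z hz => by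
      simpa [← NNReal.coe_lt_coe] using ha z hz
  obtain ⟨r, hρr, hr1⟩ := ENNReal.lt_iff_exists_nnreal_btwn.mp hρ
  have hbound : ∀ᶠ k : ℕ in atTop, ‖a ^ k‖ ≤ (r : ℝ) ^ k := by
    filter_upwards [(spectrum.pow_norm_pow_one_div_tendsto_nhds_spectralRadius a).eventually_lt_const
      hρr, eventually_ne_atTop 0] with k hk hk0
    have hroot : ‖a ^ k‖ ^ (1 / k : ℝ) < r := by
      simpa using (ENNReal.ofReal_lt_coe_iff (by positivity)).mp hk
    calc ‖a ^ k‖ = (‖a ^ k‖ ^ (1 / k : ℝ)) ^ k := by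
          rw [one_div, Real.rpow_inv_natCast_pow (norm_nonneg _) hk0]
      _ ≤ (r : ℝ) ^ k := pow_le_pow_left₀ (by positivity) hroot.le k
  exact squeeze_zero_norm' hbound
    (tendsto_pow_atTop_nhds_zero_of_lt_one r.2 (by exact_mod_cast hr1))

theorem Matrix.tendsto_pow_atTop_nhds_zero_of_forall_spectrum_norm_lt_one {ι : Type*} [Fintype ι]
    [DecidableEq ι] {A : Matrix ι ι ℝ}
    (hA : ∀ z ∈ spectrum ℂ (A.map (algebraMap ℝ ℂ)), ‖z‖ < 1) :
    Tendsto (fun k : ℕ => A ^ k) atTop (𝓝 0) := by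
  -- Any Banach algebra norm serves for Gelfand's formula; this one induces the product topology.
  let _ := Matrix.linftyOpNormedRing (n := ι) (α := ℂ)
  let _ := Matrix.linftyOpNormedAlgebra (n := ι) (R := ℂ) (α := ℂ)
  have : CompleteSpace (Matrix ι ι ℂ) := FiniteDimensional.complete ℂ _
  have hpow (k : ℕ) : (A.map (algebraMap ℝ ℂ) ^ k).map Complex.re = A ^ k := by
    rw [← RingHom.mapMatrix_apply, ← map_pow, RingHom.mapMatrix_apply, Matrix.map_map]
    ext
    simp
  have hre := ((continuous_id.matrix_map Complex.continuous_re).tendsto 0).comp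
    (_root_.tendsto_pow_atTop_nhds_zero_of_forall_spectrum_norm_lt_one hA)
  simpa only [Function.comp_def, id, hpow, Matrix.map_zero _ Complex.zero_re] using hre

section

variable {ι R : Type*} [Fintype ι] [DecidableEq ι]

omit [DecidableEq ι] in
theorem Matrix.dotProduct_mulVec_mul_mulVec [CommSemiring R] (A P : Matrix ι ι R) (v : ι → R) :
    v ⬝ᵥ (Aᵀ * P * A) *ᵥ v = (A *ᵥ v) ⬝ᵥ P *ᵥ (A *ᵥ v) := by
  rw [← mulVec_mulVec, ← mulVec_mulVec, dotProduct_transpose_mulVec, dotProduct_comm]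

theorem Matrix.dotProduct_mulVec_eq_pow_add_sum [CommRing R] (A P : Matrix ι ι R) (x : ι → R)
    (N : ℕ) :
    x ⬝ᵥ P *ᵥ x = (A ^ N *ᵥ x) ⬝ᵥ P *ᵥ (A ^ N *ᵥ x) +
      ∑ k ∈ range N, (A ^ k *ᵥ x) ⬝ᵥ (P - Aᵀ * P * A) *ᵥ (A ^ k *ᵥ x) := by
  have hstep (k : ℕ) : (A ^ k *ᵥ x) ⬝ᵥ (P - Aᵀ * P * A) *ᵥ (A ^ k *ᵥ x) =
      (A ^ k *ᵥ x) ⬝ᵥ P *ᵥ (A ^ k *ᵥ x) - (A ^ (k + 1) *ᵥ x) ⬝ᵥ P *ᵥ (A ^ (k + 1) *ᵥ x) := by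
    rw [sub_mulVec, dotProduct_sub, dotProduct_mulVec_mul_mulVec, pow_succ', ← mulVec_mulVec]
  rw [sum_congr rfl fun k _ => hstep k, sum_range_sub', pow_zero, one_mulVec]
  ring

theorem Matrix.PosDef.of_sub_transpose_mul_mul {A P : Matrix ι ι ℝ}
    (hA : Tendsto (fun k : ℕ => A ^ k) atTop (𝓝 0)) (hP : P.IsHermitian)
    (hR : (P - Aᵀ * P * A).PosDef) : P.PosDef := by
  refine PosDef.of_dotProduct_mulVec_pos hP fun x hx => ?_
  rw [star_trivial]
  have hlim :
      Tendsto (fun N : ℕ => (A ^ (N + 1) *ᵥ x) ⬝ᵥ P *ᵥ (A ^ (N + 1) *ᵥ x)) atTop (𝓝 0) := by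
    have hq : Continuous fun B : Matrix ι ι ℝ => (B *ᵥ x) ⬝ᵥ P *ᵥ (B *ᵥ x) := by fun_prop
    simpa only [Function.comp_def, zero_mulVec, mulVec_zero, zero_dotProduct] using
      ((hq.tendsto 0).comp hA).comp (tendsto_add_atTop_nat 1)
  have hbound (N : ℕ) : (A ^ (N + 1) *ᵥ x) ⬝ᵥ P *ᵥ (A ^ (N + 1) *ᵥ x) +
      x ⬝ᵥ (P - Aᵀ * P * A) *ᵥ x ≤ x ⬝ᵥ P *ᵥ x := by
    have hnonneg : 0 ≤ ∑ k ∈ range N,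
        (A ^ (k + 1) *ᵥ x) ⬝ᵥ (P - Aᵀ * P * A) *ᵥ (A ^ (k + 1) *ᵥ x) :=
      sum_nonneg fun k _ => by
        simpa using hR.posSemidef.dotProduct_mulVec_nonneg (A ^ (k + 1) *ᵥ x)
    rw [dotProduct_mulVec_eq_pow_add_sum A P x (N + 1), sum_range_succ', pow_zero, one_mulVec]
    linarith
  have hRx := hR.dotProduct_mulVec_pos hx
  rw [star_trivial] at hRx
  linarith [le_of_tendsto' (hlim.add_const _) hbound]

end

theorem Matrix.PosDef.toBlocks₁₁ {ι κ R : Type*} [Ring R] [PartialOrder R] [StarRing R]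
    {N : Matrix (ι ⊕ κ) (ι ⊕ κ) R} (hN : N.PosDef) : N.toBlocks₁₁.PosDef :=
  hN.submatrix Sum.inl_injective

theorem posdef_of_schur_and_LMI {n m : ℕ}
    (A : Matrix (Fin n) (Fin n) ℝ)
    (hA : ∀ z ∈ spectrum ℂ (A.map (algebraMap ℝ ℂ)), ‖z‖ < 1)
    (B : Matrix (Fin n) (Fin m) ℝ)
    (M : Matrix (Fin n ⊕ Fin m) (Fin n ⊕ Fin m) ℝ)
    (hM11 : (M.toBlocks₁₁).PosSemidef)
    (P : Matrix (Fin n) (Fin n) ℝ) (hP : P.IsHermitian)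
    (hLMI : (-(M + fromBlocks (Aᵀ * P * A - P) (Aᵀ * P * B) (Bᵀ * P * A)
      (Bᵀ * P * B))).PosDef) :
    P.PosDef := by
  have hblock : (-(M.toBlocks₁₁ + (Aᵀ * P * A - P))).PosDef := by
    rw [← fromBlocks_toBlocks M, fromBlocks_add, fromBlocks_neg] at hLMI
    simpa only [toBlocks_fromBlocks₁₁] using hLMI.toBlocks₁₁
  have hR : (P - Aᵀ * P * A).PosDef := by
    convert hblock.add_posSemidef hM11 using 1
    abel
  exact hR.of_sub_transpose_mul_mul
    (Matrix.tendsto_pow_atTop_nhds_zero_of_forall_spectrum_norm_lt_one hA) hP
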